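/- arXiv:1505.03345 — 4 statements merged into one kernel-verified Lean document; each statement's English description precedes it below -/
import Mathlib

section
/- Let N ≡ 1 (mod 4) be a positive integer and let k ≥ 4. If integers x̄₁, x̄₂, ȳ₁, ȳ₂ with x̄₁ odd satisfy x̄₁² + x̄₂² − N(ȳ₁² + ȳ₂²) ≡ −1 (mod 2^{k−1}), then there exist integers x̄₁', x̄₂', ȳ₁', ȳ₂' with x̄₁' odd satisfying x̄₁'² + x̄₂'² − N(ȳ₁'² + ȳ₂'²) ≡ −1 (mod 2^k). -/
theorem stmt_6 (N : ℤ) (hNpos : 0 < N) (hN : N ≡ 1 [ZMOD 4]) (k : ℕ) (hk : 4 ≤ k)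
    (x₁ x₂ y₁ y₂ : ℤ) (hx₁ : Odd x₁)
    (h : x₁ ^ 2 + x₂ ^ 2 - N * (y₁ ^ 2 + y₂ ^ 2) ≡ -1 [ZMOD (2 ^ (k - 1))]) :
    ∃ x₁' x₂' y₁' y₂' : ℤ, Odd x₁' ∧
      x₁' ^ 2 + x₂' ^ 2 - N * (y₁' ^ 2 + y₂' ^ 2) ≡ -1 [ZMOD (2 ^ k)] := by
  obtain ⟨j, rfl⟩ : ∃ j, k = j + 4 := ⟨k - 4, by omega⟩
  have hj : j + 4 - 1 = j + 3 := rfl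
  rw [hj] at h
  have hd : (2 : ℤ) ^ (j + 3) ∣ (x₁ ^ 2 + x₂ ^ 2 - N * (y₁ ^ 2 + y₂ ^ 2)) + 1 := by
    simpa [sub_neg_eq_add] using h.symm.dvd
  obtain ⟨c, hc⟩ := hd
  obtain ⟨m, hm⟩ := hx₁
  rcases Int.even_or_odd c with ⟨d, hcd⟩ | ⟨e, hce⟩
  · refine ⟨x₁, x₂, y₁, y₂, ⟨m, hm⟩, Int.modEq_iff_dvd.mpr ⟨-d, ?_⟩⟩
    linear_combination -hc - (2:ℤ) ^ (j + 3) * hcd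
  · refine ⟨x₁ + 2 ^ (j + 2), x₂, y₁, y₂, ⟨m + 2 ^ (j + 1), by rw [hm]; ring⟩,
      Int.modEq_iff_dvd.mpr ⟨-(e + m + 1 + 2 ^ j), ?_⟩⟩
    linear_combination -hc - (2:ℤ) ^ (j + 3) * hce - (2:ℤ) ^ (j + 3) * hm
end

section
/- Let N ≡ 1 (mod 4) be a positive integer. For every positive integer m there exist integers x̄₁, x̄₂, ȳ₁, ȳ₂ with x̄₁² + x̄₂² − N(ȳ₁² + ȳ₂²) ≡ −1 (mod m). -/
/-!
Write `m = 2 ^ k * r` with `r` odd and take `y₁ = y₂ = r`. Then `u = 2 N r ^ 2 - 1` is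
`≡ -1 (mod r)`, odd, and `≡ 1 (mod 4)`, so it is a unit modulo `4 m` lying in the class of `1`
modulo `4`. By Dirichlet's theorem this class modulo `4 m` contains a prime `p`, which is
`≡ 1 (mod 4)` and hence a sum of two squares `x₁ ^ 2 + x₂ ^ 2 ≡ u (mod m)`.
-/

theorem Int.exists_sq_add_sq_modEq {M : ℕ} (hM : M ≠ 0) {u : ℤ} (hu : IsCoprime u M)
    (hu4 : u ≡ 1 [ZMOD 4]) : ∃ a b : ℤ, a ^ 2 + b ^ 2 ≡ u [ZMOD M] := by
  have hcop : IsCoprime u ((4 * M : ℕ) : ℤ) := by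
    obtain ⟨k, hk⟩ := (Int.modEq_iff_dvd.mp hu4.symm)
    push_cast
    exact IsCoprime.mul_right ⟨1, -k, by linarith⟩ hu
  obtain ⟨p, -, hp, hpu⟩ := Nat.forall_exists_prime_gt_and_zmodEq 0 (by positivity) hcop
  push_cast at hpu
  have hp4 : (p : ℤ) % 4 = 1 := (hpu.of_mul_right M).trans hu4
  have : Fact p.Prime := ⟨hp⟩
  obtain ⟨a, b, hab⟩ := Nat.Prime.sq_add_sq (p := p) (by omega)
  exact ⟨a, b, by exact_mod_cast hab ▸ hpu.of_mul_left 4⟩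

theorem exists_sq_add_sq_sub_mul_sq_add_sq_modEq_neg_one {N : ℤ} (hN : Odd N) {m : ℕ}
    (hm : m ≠ 0) :
    ∃ x₁ x₂ y₁ y₂ : ℤ, x₁ ^ 2 + x₂ ^ 2 - N * (y₁ ^ 2 + y₂ ^ 2) ≡ -1 [ZMOD m] := by
  obtain ⟨k, r, hr, rfl⟩ := Nat.exists_eq_two_pow_mul_odd hm
  have hcop : IsCoprime (2 * N * r ^ 2 - 1) ((2 ^ k * r : ℕ) : ℤ) := by
    push_cast
    exact IsCoprime.mul_right (IsCoprime.pow_right ⟨-1, N * r ^ 2, by ring⟩)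
      ⟨-1, 2 * N * r, by ring⟩
  have h4 : 2 * N * r ^ 2 - 1 ≡ 1 [ZMOD 4] := by
    obtain ⟨i, rfl⟩ := hN
    obtain ⟨j, rfl⟩ := hr
    refine Int.modEq_iff_dvd.mpr ⟨-(i + 2 * (2 * i + 1) * (j ^ 2 + j)), ?_⟩
    push_cast
    ring
  obtain ⟨a, b, hab⟩ := Int.exists_sq_add_sq_modEq hm hcop h4
  refine ⟨a, b, r, r, ?_⟩
  convert hab.sub_right (N * (r ^ 2 + r ^ 2)) using 1
  ring

theorem stmt_8_general (N : ℤ) (hN : N ≡ 1 [ZMOD 4]) (m : ℕ) (hm : 0 < m) :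
    ∃ x₁ x₂ y₁ y₂ : ℤ,
      x₁ ^ 2 + x₂ ^ 2 - N * (y₁ ^ 2 + y₂ ^ 2) ≡ -1 [ZMOD (m : ℤ)] :=
  exists_sq_add_sq_sub_mul_sq_add_sq_modEq_neg_one
    (Int.odd_iff.mpr (by rw [Int.ModEq] at hN; omega)) hm.ne'

theorem stmt_8 (N : ℤ) (hNpos : 0 < N) (hN : N ≡ 1 [ZMOD 4]) (m : ℕ) (hm : 0 < m) :
    ∃ x₁ x₂ y₁ y₂ : ℤ,
      x₁ ^ 2 + x₂ ^ 2 - N * (y₁ ^ 2 + y₂ ^ 2) ≡ -1 [ZMOD (m : ℤ)] :=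
  stmt_8_general N hN m hm
end

section
/- There are no nonzero integers x₁, y₁, x₂, y₂ satisfying (x₁² + x₁y₁ − 5y₁²) + (x₂² + x₂y₂ − 5y₂²) = 0, i.e., the only integer solution of this equation is x₁ = y₁ = x₂ = y₂ = 0. -/
lemma zmod7_sq : ∀ a b : ZMod 7, a ^ 2 + b ^ 2 = 0 → a = 0 ∧ b = 0 := by decide

lemma zmod7_three : ∀ x : ZMod 7, 3 * x = 0 → x = 0 := by decide

lemma key_descent (n : ℕ) : ∀ a b c d : ℤ,
    a.natAbs + b.natAbs + c.natAbs + d.natAbs = n →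
    a ^ 2 + b ^ 2 = 21 * (c ^ 2 + d ^ 2) →
    a = 0 ∧ b = 0 ∧ c = 0 ∧ d = 0 := by
  induction n using Nat.strong_induction_on with
  | _ n ih =>
    intro a b c d hn h
    have hcast : ((a : ZMod 7)) ^ 2 + ((b : ZMod 7)) ^ 2 = 0 := by
      have := congrArg (fun z : ℤ => (z : ZMod 7)) h
      push_cast at this
      rw [this]; ring_nf
      rw [show (21 : ZMod 7) = 0 by decide]; ring
    obtain ⟨ha0, hb0⟩ := zmod7_sq _ _ hcast
    have ha : (7 : ℤ) ∣ a := (ZMod.intCast_zmod_eq_zero_iff_dvd a 7).mp ha0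
    have hb : (7 : ℤ) ∣ b := (ZMod.intCast_zmod_eq_zero_iff_dvd b 7).mp hb0
    obtain ⟨a', rfl⟩ := ha
    obtain ⟨b', rfl⟩ := hb
    have h2 : 7 * (a' ^ 2 + b' ^ 2) = 3 * (c ^ 2 + d ^ 2) := by nlinarith [h]
    have hcast2 : (3 : ZMod 7) * (((c : ZMod 7)) ^ 2 + ((d : ZMod 7)) ^ 2) = 0 := by
      have := congrArg (fun z : ℤ => (z : ZMod 7)) h2
      push_cast at this
      rw [← this]; ring_nf
      rw [show (7 : ZMod 7) = 0 by decide]; ring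
    obtain ⟨hc0, hd0⟩ := zmod7_sq _ _ (zmod7_three _ hcast2)
    have hc : (7 : ℤ) ∣ c := (ZMod.intCast_zmod_eq_zero_iff_dvd c 7).mp hc0
    have hd : (7 : ℤ) ∣ d := (ZMod.intCast_zmod_eq_zero_iff_dvd d 7).mp hd0
    obtain ⟨c', rfl⟩ := hc
    obtain ⟨d', rfl⟩ := hd
    have h3 : a' ^ 2 + b' ^ 2 = 21 * (c' ^ 2 + d' ^ 2) := by nlinarith [h2]
    set m := a'.natAbs + b'.natAbs + c'.natAbs + d'.natAbs with hm
    by_cases hm0 : m = 0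
    · have : a'.natAbs = 0 ∧ b'.natAbs = 0 ∧ c'.natAbs = 0 ∧ d'.natAbs = 0 := by omega
      refine ⟨?_, ?_, ?_, ?_⟩ <;> simp [Int.natAbs_eq_zero.mp this.1,
        Int.natAbs_eq_zero.mp this.2.1, Int.natAbs_eq_zero.mp this.2.2.1,
        Int.natAbs_eq_zero.mp this.2.2.2]
    · have hn7 : (7 * a').natAbs + (7 * b').natAbs + (7 * c').natAbs + (7 * d').natAbs
          = 7 * m := by simp [Int.natAbs_mul, hm]; ring
      have hlt : m < n := by omega
      obtain ⟨ha, hb, hc, hd⟩ := ih m hlt a' b' c' d' rfl h3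
      exact ⟨by simp [ha], by simp [hb], by simp [hc], by simp [hd]⟩

theorem stmt_9 (x₁ y₁ x₂ y₂ : ℤ)
    (h : (x₁ ^ 2 + x₁ * y₁ - 5 * y₁ ^ 2) + (x₂ ^ 2 + x₂ * y₂ - 5 * y₂ ^ 2) = 0) :
    x₁ = 0 ∧ y₁ = 0 ∧ x₂ = 0 ∧ y₂ = 0 := by
  have hmain : (2 * x₁ + y₁) ^ 2 + (2 * x₂ + y₂) ^ 2 = 21 * (y₁ ^ 2 + y₂ ^ 2) := by
    linear_combination 4 * h
  obtain ⟨h1, h2, h3, h4⟩ := key_descent _ (2 * x₁ + y₁) (2 * x₂ + y₂) y₁ y₂ rfl hmain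
  refine ⟨by omega, h3, by omega, h4⟩
end

section
/- Let A be the 4×4 block-diagonal integer matrix with two blocks equal to [[1,1],[0,−5]]. Then the quadratic form v ↦ vᵀAv on Z⁴ represents 0 only trivially: vᵀAv = 0 implies v = 0. -/
open Matrix

lemma mod3_sq (a c : ℤ) (h : (3:ℤ) ∣ a^2 + c^2) : (3:ℤ) ∣ a ∧ (3:ℤ) ∣ c := by
  have key : ∀ x y : ZMod 3, x^2 + y^2 = 0 → x = 0 ∧ y = 0 := by decide
  have h0 : ((a^2 + c^2 : ℤ) : ZMod 3) = 0 := by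
    exact_mod_cast (ZMod.intCast_zmod_eq_zero_iff_dvd _ 3).2 h
  push_cast at h0
  obtain ⟨ha, hc⟩ := key _ _ h0
  constructor
  · exact_mod_cast (ZMod.intCast_zmod_eq_zero_iff_dvd a 3).1 ha
  · exact_mod_cast (ZMod.intCast_zmod_eq_zero_iff_dvd c 3).1 hc

lemma descent : ∀ n : ℕ, ∀ a c y w : ℤ, (y^2 + w^2).toNat ≤ n →
    a^2 + c^2 = 21*(y^2 + w^2) → y = 0 ∧ w = 0 ∧ a = 0 ∧ c = 0 := by
  intro n
  induction n with
  | zero =>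
    intro a c y w hle heq
    have hy : y = 0 ∧ w = 0 := by
      have : y^2 + w^2 ≤ 0 := by omega
      constructor <;> nlinarith [sq_nonneg y, sq_nonneg w]
    obtain ⟨hy0, hw0⟩ := hy
    refine ⟨hy0, hw0, ?_, ?_⟩ <;> subst hy0 <;> subst hw0 <;>
      nlinarith [sq_nonneg a, sq_nonneg c]
  | succ n ih =>
    intro a c y w hle heq
    by_cases hyw : y = 0 ∧ w = 0
    · obtain ⟨hy0, hw0⟩ := hyw
      refine ⟨hy0, hw0, ?_, ?_⟩ <;> subst hy0 <;> subst hw0 <;>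
        nlinarith [sq_nonneg a, sq_nonneg c]
    · -- 3 ∣ a, 3 ∣ c
      have h3ac : (3:ℤ) ∣ a ∧ (3:ℤ) ∣ c := by
        apply mod3_sq
        exact ⟨7*(y^2+w^2), by linarith⟩
      obtain ⟨⟨a', rfl⟩, ⟨c', rfl⟩⟩ := h3ac
      have heq2 : 3*(a'^2 + c'^2) = 7*(y^2 + w^2) := by ring_nf; ring_nf at heq; linarith
      have h3yw : (3:ℤ) ∣ y ∧ (3:ℤ) ∣ w := by
        apply mod3_sq
        exact ⟨(a'^2+c'^2) - 2*(y^2+w^2), by linarith⟩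
      obtain ⟨⟨y', rfl⟩, ⟨w', rfl⟩⟩ := h3yw
      have heq3 : a'^2 + c'^2 = 21*(y'^2 + w'^2) := by nlinarith [heq2]
      have hpos : (0:ℤ) < y'^2 + w'^2 := by
        rcases lt_or_eq_of_le (by positivity : (0:ℤ) ≤ y'^2 + w'^2) with h' | h'
        · exact h'
        · exfalso
          have hy' : y' = 0 := by nlinarith [sq_nonneg y', sq_nonneg w']
          have hw' : w' = 0 := by nlinarith [sq_nonneg y', sq_nonneg w']
          exact hyw ⟨by rw [hy']; ring, by rw [hw']; ring⟩
      have hsmall : ((y'^2 + w'^2)).toNat ≤ n := by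
        have h9 : (3*y')^2 + (3*w')^2 = 9*(y'^2 + w'^2) := by ring
        omega
      obtain ⟨hy', hw', ha', hc'⟩ := ih a' c' y' w' hsmall heq3
      exact ⟨by rw [hy']; ring, by rw [hw']; ring, by rw [ha']; ring, by rw [hc']; ring⟩

theorem stmt_13 (A : Matrix (Fin 4) (Fin 4) ℤ)
    (hA : A = !![1, 1, 0, 0;
                 0, -5, 0, 0;
                 0, 0, 1, 1;
                 0, 0, 0, -5])
    (v : Fin 4 → ℤ) (h : v ⬝ᵥ A.mulVec v = 0) :
    v = 0 := by
  subst hA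
  set a := v 0 with ha
  set b := v 1 with hb
  set c := v 2 with hc
  set d := v 3 with hd
  have heq : a^2 + a*b - 5*b^2 + c^2 + c*d - 5*d^2 = 0 := by
    simp [dotProduct, Matrix.mulVec, Fin.sum_univ_four, Matrix.vecHead, Matrix.vecTail] at h
    linarith [h]
  have heq2 : (2*a+b)^2 + (2*c+d)^2 = 21*(b^2 + d^2) := by ring_nf; nlinarith [heq]
  obtain ⟨hb0, hd0, hab, hcd⟩ :=
    descent (b^2 + d^2).toNat (2*a+b) (2*c+d) b d le_rfl heq2
  have ha0 : a = 0 := by omega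
  have hc0 : c = 0 := by omega
  funext i
  fin_cases i
  · exact ha0
  · exact hb0
  · exact hc0
  · exact hd0
end
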